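/- Let B₁, B₂ be invertible 2×2 real matrices with ‖B₁‖ < 1 and ‖B₂‖ < 1, let p ∈ [1/2, 1), q > 1, and let ε, κ > 0 be such that q·log(p)/((1−q)(ε+κ)) < 1 and such that for some integer k ≥ 1 one has lim_{n→∞} ‖B₁ⁿ B₂ᵏ B₁ⁿ‖^{1/(2n+k)} = ϱ̲(B₁, B₂) ≤ e^{−ε−κ}. Then 𝔯_q(B₁, B₂, p) ≤ q·log(p)/((1−q)(ε+κ)). -/

import Mathlib

open MeasureTheory Filter Topology

noncomputable section

/-- The operator norm of a `d × d` real matrix induced by the Euclidean norm on `ℝ^d`. -/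
noncomputable def opNorm {d : ℕ} (A : Matrix (Fin d) (Fin d) ℝ) : ℝ :=
  ‖Matrix.toEuclideanCLM (𝕜 := ℝ) (n := Fin d) A‖

/-- Removed from Mathlib; restated here for real square matrices. -/
theorem Matrix.isHermitian_transpose_mul_self {d : ℕ} (A : Matrix (Fin d) (Fin d) ℝ) :
    (A.transpose * A).IsHermitian := by
  simpa using Matrix.isHermitian_conjTranspose_mul_self A

/-- The singular values of a `d × d` real matrix, in decreasing order:
`singularValues A j` is `σ_{j+1}(A)`, the `(j+1)`-st largest singular value. -/
noncomputable def singularValues {d : ℕ} (A : Matrix (Fin d) (Fin d) ℝ) : Fin d → ℝ :=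
  fun j =>
    (fun i => Real.sqrt ((Matrix.isHermitian_transpose_mul_self A).eigenvalues i))
      (Tuple.sort (fun i => Real.sqrt ((Matrix.isHermitian_transpose_mul_self A).eigenvalues i))
        (Fin.rev j))

/-- The singular value function `φ^s(A)`. -/
noncomputable def svf {d : ℕ} (s : ℝ) (A : Matrix (Fin d) (Fin d) ℝ) : ℝ :=
  if (d : ℝ) ≤ s then |A.det| ^ (s / d)
  else ∏ i : Fin d,
    if (i : ℕ) < ⌊s⌋₊ then singularValues A i
    else if (i : ℕ) = ⌊s⌋₊ then singularValues A i ^ (s - (⌊s⌋₊ : ℝ))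
    else 1

/-- The product `A_{w 0} ⋯ A_{w (n-1)}` of matrices along the word `w`. -/
noncomputable def wordProd {d n : ℕ} (A : Fin 2 → Matrix (Fin d) (Fin d) ℝ)
    (w : Fin n → Fin 2) : Matrix (Fin d) (Fin d) ℝ :=
  (List.ofFn fun j => A (w j)).prod

/-- The probability vector `(p, 1-p)`. -/
noncomputable def pvec (p : ℝ) : Fin 2 → ℝ := ![p, 1 - p]

/-- `Σ_{i₁,…,i_n ∈ {1,2}} φ^s(A_{i₁}⋯A_{i_n})^{1−q} p_{i₁}^q ⋯ p_{i_n}^q`. -/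
noncomputable def Zsum (A : Fin 2 → Matrix (Fin 2) (Fin 2) ℝ) (p q s : ℝ) (n : ℕ) : ℝ :=
  ∑ w : Fin n → Fin 2,
    svf s (wordProd A w) ^ (1 - q) * ∏ j : Fin n, pvec p (w j) ^ q

/-- `𝔯_q(A₁, A₂, p)`. -/
noncomputable def rqDim (A : Fin 2 → Matrix (Fin 2) (Fin 2) ℝ) (p q : ℝ) : ℝ :=
  sSup {s : ℝ | 0 < s ∧ Summable (fun n : ℕ => Zsum A p q s (n + 1))}

/-- `R_q(A₁, A₂, p, s)`. -/
noncomputable def Rq (A : Fin 2 → Matrix (Fin 2) (Fin 2) ℝ) (p q s : ℝ) : ℝ :=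
  limUnder atTop (fun n : ℕ => (1 / (n : ℝ)) * Real.log (Zsum A p q s n))

/-- The minimum over all words of length `n` of the norm of the corresponding product. -/
noncomputable def minNormProd (A : Fin 2 → Matrix (Fin 2) (Fin 2) ℝ) (n : ℕ) : ℝ :=
  ⨅ w : Fin n → Fin 2, opNorm (wordProd A w)

/-- The lower spectral radius `ϱ̲(A₁, A₂)`. -/
noncomputable def lsr (A : Fin 2 → Matrix (Fin 2) (Fin 2) ℝ) : ℝ :=
  limUnder atTop (fun n : ℕ => minNormProd A n ^ (1 / (n : ℝ)))

/-- Pairs of invertible `2 × 2` matrices of operator norm less than one. -/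
def validPair : Set (Matrix (Fin 2) (Fin 2) ℝ × Matrix (Fin 2) (Fin 2) ℝ) :=
  {B | IsUnit B.1 ∧ IsUnit B.2 ∧ opNorm B.1 < 1 ∧ opNorm B.2 < 1}

/-- Rotation of `ℝ²` about the origin through angle `θ`. -/
noncomputable def rot (θ : ℝ) : Matrix (Fin 2) (Fin 2) ℝ :=
  !![Real.cos θ, -Real.sin θ; Real.sin θ, Real.cos θ]

/-- `(A₁, A₂)` is `(c, ε, λ)`-resistant. -/
def ResistantWith (c ε lam : ℝ) (A : Fin 2 → Matrix (Fin 2) (Fin 2) ℝ) : Prop :=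
  ∀ n : ℕ, 1 ≤ n → ∀ w : Fin n → Fin 2,
    ((Finset.univ.filter fun j => w j = 1).card : ℝ) ≤ ε * n →
    c * lam ^ n ≤ opNorm (wordProd A w)

/-- `(A₁, A₂)` is resistant. -/
def Resistant (A : Fin 2 → Matrix (Fin 2) (Fin 2) ℝ) : Prop :=
  ∃ c > (0:ℝ), ∃ ε > (0:ℝ), ∃ lam > (1:ℝ), ResistantWith c ε lam A

/-- `ℋ`: `2 × 2` real matrices of determinant one with two unequal real eigenvalues. -/
def Hset : Set (Matrix (Fin 2) (Fin 2) ℝ) :=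
  {H | H.det = 1 ∧ ∃ a b : ℝ, a ≠ b ∧ H.charpoly.IsRoot a ∧ H.charpoly.IsRoot b}

/-- `ℰ`: `2 × 2` real matrices of determinant one with non-real eigenvalues. -/
def Eset : Set (Matrix (Fin 2) (Fin 2) ℝ) :=
  {R | R.det = 1 ∧ ∀ x : ℝ, ¬ R.charpoly.IsRoot x}


/-- Abbreviation for the space of `2 × 2` real matrices. -/
abbrev Mat2 := Matrix (Fin 2) (Fin 2) ℝ

/-!
Suppose `s` lies in the summability set but exceeds `q log p / ((1 - q)(ε + κ))`. Then
`ϱ̲(B₁, B₂) ≤ e^{-ε-κ} < ρ := p ^ (q / (s (q - 1)))`, so for large `n` the word `B₁ⁿB₂ᵏB₁ⁿ`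
has norm at most `ρ^(2n+k)`. Since `φ^s(A) ≤ ‖A‖^s` and `1 - q < 0`, its term in the sum over
words of length `2n + k` is at least `ρ^(-(2n+k) s (q-1)) p^(2nq) (1-p)^(kq) = ((1-p)/p)^(qk)`,
a positive constant; but the terms of a convergent series tend to zero.
-/

open Matrix

open scoped Matrix.Norms.L2Operator

section SingularValues

variable {d : ℕ} (A : Matrix (Fin d) (Fin d) ℝ)

lemma opNorm_eq_l2_opNorm : opNorm A = ‖A‖ := rfl

lemma opNorm_nonneg : 0 ≤ opNorm A := norm_nonneg _

lemma eigenvalues_transpose_mul_self_le (i : Fin d) :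
    (isHermitian_transpose_mul_self A).eigenvalues i ≤ opNorm A ^ 2 := by
  have : Nonempty (Fin d) := ⟨i⟩
  have hmem := (isHermitian_transpose_mul_self A).eigenvalues_mem_spectrum_real i
  rw [opNorm_eq_l2_opNorm, sq, ← l2_opNorm_conjTranspose_mul_self,
    conjTranspose_eq_transpose_of_trivial]
  exact (le_abs_self _).trans (spectrum.norm_le_norm_of_mem hmem)

lemma singularValues_le_opNorm (j : Fin d) : singularValues A j ≤ opNorm A :=
  (Real.sqrt_le_sqrt (eigenvalues_transpose_mul_self_le A _)).trans_eq
    (Real.sqrt_sq (opNorm_nonneg A))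

variable {A}

lemma singularValues_pos (hA : IsUnit A) (j : Fin d) : 0 < singularValues A j := by
  have hpos : (Aᴴ * A).PosDef :=
    .conjTranspose_mul_self A (mulVec_injective_iff_isUnit.mpr hA)
  exact Real.sqrt_pos.2 (hpos.eigenvalues_pos _)

lemma opNorm_pos (hd : d ≠ 0) (hA : IsUnit A) : 0 < opNorm A :=
  (singularValues_pos hA ⟨0, Nat.pos_of_ne_zero hd⟩).trans_le (singularValues_le_opNorm A _)

end SingularValues

section SingularValueFunction

variable {d : ℕ} {A : Matrix (Fin d) (Fin d) ℝ} {s : ℝ}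

lemma abs_det_le_opNorm_pow (A : Matrix (Fin d) (Fin d) ℝ) : |A.det| ≤ opNorm A ^ d := by
  refine abs_le_of_sq_le_sq ?_ (pow_nonneg (opNorm_nonneg A) _)
  have hdet := (isHermitian_transpose_mul_self A).det_eq_prod_eigenvalues
  simp only [RCLike.ofReal_real_eq_id, id, det_mul, det_transpose] at hdet
  calc A.det ^ 2 = ∏ i, (isHermitian_transpose_mul_self A).eigenvalues i := by rw [sq, hdet]
    _ ≤ ∏ _i : Fin d, opNorm A ^ 2 :=
      Finset.prod_le_prod (fun i _ => eigenvalues_conjTranspose_mul_self_nonneg A i)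
        fun i _ => eigenvalues_transpose_mul_self_le A i
    _ = (opNorm A ^ d) ^ 2 := by
      rw [Finset.prod_const, Finset.card_univ, Fintype.card_fin, ← pow_mul, ← pow_mul, mul_comm]

lemma svf_nonneg (s : ℝ) (A : Matrix (Fin d) (Fin d) ℝ) : 0 ≤ svf s A := by
  unfold svf
  split_ifs
  · positivity
  · refine Finset.prod_nonneg fun i _ => ?_
    split_ifs
    · exact Real.sqrt_nonneg _
    · exact Real.rpow_nonneg (Real.sqrt_nonneg _) _
    · exact zero_le_one

lemma svf_pos (hA : IsUnit A) : 0 < svf s A := by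
  unfold svf
  split_ifs
  · exact Real.rpow_pos_of_pos (abs_pos.2 ((isUnit_iff_isUnit_det A).1 hA).ne_zero) _
  · refine Finset.prod_pos fun i _ => ?_
    split_ifs
    · exact singularValues_pos hA i
    · exact Real.rpow_pos_of_pos (singularValues_pos hA i) _
    · exact one_pos

def svfExponent (s : ℝ) (i : ℕ) : ℝ :=
  if i < ⌊s⌋₊ then 1 else if i = ⌊s⌋₊ then s - ⌊s⌋₊ else 0

lemma svfExponent_nonneg (hs : 0 ≤ s) (i : ℕ) : 0 ≤ svfExponent s i := by
  unfold svfExponent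
  split_ifs
  · exact zero_le_one
  · exact sub_nonneg.2 (Nat.floor_le hs)
  · exact le_rfl

lemma sum_svfExponent (hs : 0 ≤ s) (hsd : s < d) : ∑ i : Fin d, svfExponent s i = s := by
  have hm : ⌊s⌋₊ < d := (Nat.floor_lt hs).2 hsd
  have hsplit (i : Fin d) : svfExponent s i
      = (if (i : ℕ) < ⌊s⌋₊ then 1 else 0) + if i = ⟨⌊s⌋₊, hm⟩ then s - ⌊s⌋₊ else 0 := by
    simp only [svfExponent, Fin.ext_iff]
    split_ifs <;> first | omega | ring
  rw [Finset.sum_congr rfl fun i _ => hsplit i, Finset.sum_add_distrib, Finset.sum_boole,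
    Fin.card_filter_val_lt, min_eq_right hm.le, Finset.sum_ite_eq']
  simp

lemma svf_le_opNorm_rpow (hd : d ≠ 0) (hs : 0 ≤ s) (A : Matrix (Fin d) (Fin d) ℝ) :
    svf s A ≤ opNorm A ^ s := by
  have hA := opNorm_nonneg A
  unfold svf
  split_ifs with hsd
  · calc |A.det| ^ (s / d) ≤ (opNorm A ^ d) ^ (s / d) :=
          Real.rpow_le_rpow (abs_nonneg _) (abs_det_le_opNorm_pow A) (by positivity)
      _ = opNorm A ^ s := by
          rw [← Real.rpow_natCast, ← Real.rpow_mul hA, mul_div_cancel₀ _ (by exact_mod_cast hd)]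
  · calc _ ≤ ∏ i : Fin d, opNorm A ^ svfExponent s i := by
          refine Finset.prod_le_prod (fun i _ => ?_) fun i _ => ?_
          · split_ifs
            · exact Real.sqrt_nonneg _
            · exact Real.rpow_nonneg (Real.sqrt_nonneg _) _
            · exact zero_le_one
          · unfold svfExponent
            split_ifs
            · exact (Real.rpow_one _).symm ▸ singularValues_le_opNorm A i
            · exact Real.rpow_le_rpow (Real.sqrt_nonneg _) (singularValues_le_opNorm A i)
                (sub_nonneg.2 (Nat.floor_le hs))
            · exact (Real.rpow_zero _).symm.le
      _ = opNorm A ^ s := by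
          rw [← Real.rpow_sum_of_nonneg hA (f := fun i : Fin d => svfExponent s i)
              fun i _ => svfExponent_nonneg hs i,
            sum_svfExponent hs (not_le.1 hsd)]

lemma opNorm_rpow_le_svf_rpow (hd : d ≠ 0) (hA : IsUnit A) (hs : 0 ≤ s) {q : ℝ} (hq : 1 ≤ q) :
    opNorm A ^ (s * (1 - q)) ≤ svf s A ^ (1 - q) := by
  rw [Real.rpow_mul (opNorm_nonneg A)]
  exact Real.rpow_le_rpow_of_nonpos (svf_pos hA) (svf_le_opNorm_rpow hd hs A) (by linarith)

end SingularValueFunction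

section Words

variable {d : ℕ} (A : Fin 2 → Matrix (Fin d) (Fin d) ℝ)

lemma wordProd_append {m n : ℕ} (u : Fin m → Fin 2) (v : Fin n → Fin 2) :
    wordProd A (Fin.append u v) = wordProd A u * wordProd A v := by
  have h : (fun j => A (Fin.append u v j)) = Fin.append (fun j => A (u j)) fun j => A (v j) := by
    funext j
    cases j using Fin.addCases <;> simp only [Fin.append_left, Fin.append_right]
  rw [wordProd, h, List.ofFn_fin_append, List.prod_append, wordProd, wordProd]

lemma wordProd_const (n : ℕ) (c : Fin 2) : wordProd A (fun _ : Fin n => c) = A c ^ n := by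
  rw [wordProd, List.ofFn_const, List.prod_replicate]

def sandwichWord (n k : ℕ) : Fin (n + k + n) → Fin 2 :=
  Fin.append (Fin.append (fun _ => 0) fun _ => 1) fun _ => 0

lemma wordProd_sandwichWord (B₁ B₂ : Matrix (Fin d) (Fin d) ℝ) (n k : ℕ) :
    wordProd ![B₁, B₂] (sandwichWord n k) = B₁ ^ n * B₂ ^ k * B₁ ^ n := by
  simp only [sandwichWord, wordProd_append, wordProd_const, Matrix.cons_val_zero,
    Matrix.cons_val_one]

lemma prod_pvec_sandwichWord (p q : ℝ) (n k : ℕ) :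
    ∏ j, pvec p (sandwichWord n k j) ^ q = (p ^ q) ^ (2 * n) * ((1 - p) ^ q) ^ k := by
  simp only [sandwichWord, Fin.prod_univ_add, Fin.append_left, Fin.append_right,
    Finset.prod_const, Finset.card_univ, Fintype.card_fin, pvec, Matrix.cons_val_zero,
    Matrix.cons_val_one]
  ring

end Words

section Partition

variable (A : Fin 2 → Matrix (Fin 2) (Fin 2) ℝ) {p q s : ℝ}

lemma pvec_nonneg (hp0 : 0 ≤ p) (hp1 : p ≤ 1) (i : Fin 2) : 0 ≤ pvec p i := by
  fin_cases i <;> simp [pvec] <;> linarith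

lemma term_le_Zsum (hp0 : 0 ≤ p) (hp1 : p ≤ 1) {n : ℕ} (w : Fin n → Fin 2) :
    svf s (wordProd A w) ^ (1 - q) * ∏ j, pvec p (w j) ^ q ≤ Zsum A p q s n :=
  Finset.single_le_sum (f := fun w : Fin n → Fin 2 =>
      svf s (wordProd A w) ^ (1 - q) * ∏ j, pvec p (w j) ^ q)
    (fun _ _ => mul_nonneg (Real.rpow_nonneg (svf_nonneg _ _) _)
      (Finset.prod_nonneg fun _ _ => Real.rpow_nonneg (pvec_nonneg hp0 hp1 _) _))
    (Finset.mem_univ w)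

lemma tendsto_Zsum_zero (h : Summable fun n => Zsum A p q s (n + 1)) :
    Tendsto (Zsum A p q s) atTop (𝓝 0) :=
  ((summable_nat_add_iff 1).mp h).tendsto_atTop_zero

end Partition

lemma rpow_le_rpow_mul_of_rpow_one_div_le {x p m t a : ℝ} (hx : 0 ≤ x) (hp : 0 ≤ p)
    (hm : 0 < m) (ht : 0 < t) (h : x ^ (1 / m) ≤ p ^ (a / t)) : x ^ t ≤ p ^ (a * m) := by
  have := Real.rpow_le_rpow (by positivity) h (by positivity : 0 ≤ m * t)
  rwa [← Real.rpow_mul hx, ← Real.rpow_mul hp, show 1 / m * (m * t) = t by field_simp,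
    show a / t * (m * t) = a * m by field_simp] at this

lemma le_Zsum_sandwich {B₁ B₂ : Mat2} (h1 : IsUnit B₁) (h2 : IsUnit B₂) {p q s : ℝ}
    (hp0 : 0 < p) (hp1 : p ≤ 1) (hs : 0 < s) (hq : 1 < q) {n k : ℕ} (hk : 1 ≤ k)
    (hW : opNorm (B₁ ^ n * B₂ ^ k * B₁ ^ n) ^ (1 / (2 * (n : ℝ) + k)) ≤ p ^ (q / (s * (q - 1)))) :
    ((1 - p) ^ q / p ^ q) ^ k ≤ Zsum ![B₁, B₂] p q s (n + k + n) := by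
  set W := B₁ ^ n * B₂ ^ k * B₁ ^ n
  have hWunit : IsUnit W := ((h1.pow n).mul (h2.pow k)).mul (h1.pow n)
  have hWpos : 0 < opNorm W := opNorm_pos two_ne_zero hWunit
  have hW' : opNorm W ^ (s * (q - 1)) ≤ p ^ (q * (2 * n + k)) :=
    rpow_le_rpow_mul_of_rpow_one_div_le hWpos.le hp0.le (by positivity)
      (mul_pos hs (by linarith)) hW
  have hpow : p ^ (q * (2 * n + k)) = (p ^ q) ^ (2 * n) * (p ^ q) ^ k := by
    rw [Real.rpow_mul hp0.le, ← pow_add, ← Real.rpow_natCast]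
    push_cast
    ring_nf
  calc ((1 - p) ^ q / p ^ q) ^ k
      = (p ^ (q * (2 * n + k)))⁻¹ * ((p ^ q) ^ (2 * n) * ((1 - p) ^ q) ^ k) := by
        rw [hpow, mul_inv, div_pow]
        field_simp
    _ ≤ opNorm W ^ (s * (1 - q)) * ((p ^ q) ^ (2 * n) * ((1 - p) ^ q) ^ k) := by
        refine mul_le_mul_of_nonneg_right ?_ (by positivity)
        rw [show s * (1 - q) = -(s * (q - 1)) by ring, Real.rpow_neg hWpos.le]
        exact inv_anti₀ (by positivity) hW'
    _ ≤ svf s W ^ (1 - q) * ((p ^ q) ^ (2 * n) * ((1 - p) ^ q) ^ k) := by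
        refine mul_le_mul_of_nonneg_right ?_ (by positivity)
        exact opNorm_rpow_le_svf_rpow two_ne_zero hWunit hs.le hq.le
    _ ≤ Zsum ![B₁, B₂] p q s (n + k + n) := by
        have hWword : wordProd ![B₁, B₂] (sandwichWord n k) = W := wordProd_sandwichWord _ _ n k
        rw [← prod_pvec_sandwichWord, ← hWword]
        exact term_le_Zsum _ hp0.le hp1 _

theorem stmt18_general (B₁ B₂ : Mat2) (h1 : IsUnit B₁) (h2 : IsUnit B₂)
    (p q ε κ : ℝ)
    (hp : p ∈ Set.Ico (1 / 2 : ℝ) 1) (hq : 1 < q) (hε : 0 < ε) (hκ : 0 < κ)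
    (hk : ∃ k : ℕ, 1 ≤ k ∧
      Filter.Tendsto
          (fun n : ℕ => opNorm (B₁ ^ n * B₂ ^ k * B₁ ^ n) ^ (1 / (2 * (n : ℝ) + k)))
          Filter.atTop (𝓝 (lsr ![B₁, B₂])) ∧
      lsr ![B₁, B₂] ≤ Real.exp (-ε - κ)) :
    rqDim ![B₁, B₂] p q ≤ q * Real.log p / ((1 - q) * (ε + κ)) := by
  obtain ⟨k, hk1, hlim, hlsr⟩ := hk
  have hp0 : 0 < p := by linarith [hp.1]
  have hlogp : Real.log p < 0 := Real.log_neg hp0 hp.2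
  have hneg : (1 - q) * (ε + κ) < 0 := mul_neg_of_neg_of_pos (by linarith) (by linarith)
  refine Real.sSup_le (fun s ⟨hs, hsum⟩ => ?_) (div_nonneg_of_nonpos (by nlinarith) hneg.le)
  by_contra! hst
  have hsq : 0 < s * (q - 1) := mul_pos hs (by linarith)
  have hρ : lsr ![B₁, B₂] < p ^ (q / (s * (q - 1))) := by
    refine hlsr.trans_lt ?_
    rw [Real.rpow_def_of_pos hp0, Real.exp_lt_exp, mul_div_assoc', lt_div_iff₀ hsq]
    rw [div_lt_iff_of_neg hneg] at hst
    linarith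
  have hbound : ∀ᶠ n in atTop, ((1 - p) ^ q / p ^ q) ^ k ≤ Zsum ![B₁, B₂] p q s (n + k + n) :=
    (hlim.eventually_lt_const hρ).mono fun n hn =>
      le_Zsum_sandwich h1 h2 hp0 hp.2.le hs hq hk1 hn.le
  have hzero : Tendsto (fun n => Zsum ![B₁, B₂] p q s (n + k + n)) atTop (𝓝 0) :=
    (tendsto_Zsum_zero _ hsum).comp <|
      tendsto_atTop_mono (fun n => (n.le_add_right k).trans (Nat.le_add_right _ n)) tendsto_id
  have hpos : 0 < ((1 - p) ^ q / p ^ q) ^ k := by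
    have : 0 < 1 - p := by linarith [hp.2]
    positivity
  exact (ge_of_tendsto hzero hbound).not_gt hpos

/-- If `q·log p/((1−q)(ε+κ)) < 1` and for some `k ≥ 1` one has
`lim_n ‖B₁ⁿB₂ᵏB₁ⁿ‖^{1/(2n+k)} = ϱ̲(B₁,B₂) ≤ e^{−ε−κ}`, then
`𝔯_q(B₁,B₂,p) ≤ q·log p/((1−q)(ε+κ))`. -/
theorem stmt18 (B₁ B₂ : Mat2) (h1 : IsUnit B₁) (h2 : IsUnit B₂)
    (hn1 : opNorm B₁ < 1) (hn2 : opNorm B₂ < 1) (p q ε κ : ℝ)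
    (hp : p ∈ Set.Ico (1 / 2 : ℝ) 1) (hq : 1 < q) (hε : 0 < ε) (hκ : 0 < κ)
    (hlt : q * Real.log p / ((1 - q) * (ε + κ)) < 1)
    (hk : ∃ k : ℕ, 1 ≤ k ∧
      Filter.Tendsto
          (fun n : ℕ => opNorm (B₁ ^ n * B₂ ^ k * B₁ ^ n) ^ (1 / (2 * (n : ℝ) + k)))
          Filter.atTop (𝓝 (lsr ![B₁, B₂])) ∧
      lsr ![B₁, B₂] ≤ Real.exp (-ε - κ)) :
    rqDim ![B₁, B₂] p q ≤ q * Real.log p / ((1 - q) * (ε + κ)) :=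
  stmt18_general B₁ B₂ h1 h2 p q ε κ hp hq hε hκ hk

end
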